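/- arXiv:1601.01031 — 2 statements merged into one kernel-verified Lean document; each statement's English description precedes it below -/
import Mathlib

section
/- Let σ_ω be a cyclic supercharacter modulo n, where ω is a unit modulo n, and set k = gcd(ω − 1, n). Then for every y, σ_ω(y + n/k) = e(1/k)·σ_ω(y), and σ_ω(−y) is the complex conjugate of σ_ω(y). -/
open Finset Pointwise

/-- `e(θ) = exp(2πiθ)`. -/
noncomputable def e2 (θ : ℝ) : ℂ := Complex.exp (2 * Real.pi * Complex.I * θ)

/-- The cyclic supercharacter `σ_ω : ℤ/nℤ → ℂ` attached to a unit `ω` mod `n`: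
`σ_ω(y) = ∑_{j=1}^{d} e(ω^j y / n)` where `d` is the multiplicative order of `ω`. -/
noncomputable def cyclicSuperchar (n : ℕ) (ω : (ZMod n)ˣ) (y : ZMod n) : ℂ :=
  ∑ j ∈ Finset.Icc 1 (orderOf ω),
    e2 (((((ω ^ j : (ZMod n)ˣ) : ZMod n) * y).val : ℝ) / (n : ℝ))

/-- `H m`: the set of traces of matrices in `SU_m(ℂ)` (the filled `m`-cusped hypocycloid). -/
noncomputable def H (m : ℕ) : Set ℂ :=
  Set.range fun M : Matrix.specialUnitaryGroup (Fin m) ℂ =>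
    Matrix.trace (M : Matrix (Fin m) (Fin m) ℂ)

/-- `P m`: the convex hull of `H m` (the filled regular `m`-gon). -/
noncomputable def Pset (m : ℕ) : Set ℂ := convexHull ℝ (H m)

/-- `c_{j,k}` : the coefficient of `x^j` in the remainder of `x^k` mod `Φ_d(x)`. -/
noncomputable def cExp (d j k : ℕ) : ℤ :=
  (((Polynomial.X : Polynomial ℤ) ^ k) %ₘ Polynomial.cyclotomic d ℤ).coeff j

/-- The Laurent-polynomial map `g_d(z_1,…,z_{φ(d)}) = ∑_{k=1}^d ∏_j z_j^{c_{j,k}}`. -/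
noncomputable def gphi (d : ℕ) (z : Fin (Nat.totient d) → ℂ) : ℂ :=
  ∑ k ∈ Finset.Icc 1 d, ∏ j : Fin (Nat.totient d), z j ^ (cExp d (j : ℕ) k)

/-- The image of `g_d` restricted to the torus `𝕋^{φ(d)}`. -/
noncomputable def gImage (d : ℕ) : Set ℂ :=
  {w : ℂ | ∃ z : Fin (Nat.totient d) → ℂ, (∀ j, ‖z j‖ = 1) ∧ gphi d z = w}

/-- The `k`-fold Minkowski sum `A^{⊕k}` of a subset of `ℂ` with itself. -/
def minkSumPow (A : Set ℂ) (k : ℕ) : Set ℂ :=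
  {z : ℂ | ∃ f : Fin k → ℂ, (∀ i, f i ∈ A) ∧ ∑ i, f i = z}

/-- Scaling a subset of `ℂ` by a real number. -/
def scale (r : ℝ) (A : Set ℂ) : Set ℂ := (fun z => (r : ℂ) * z) '' A

/-- The sets `A k` fill out `B` as `k → ∞`. -/
def FillsOut (A : ℕ → Set ℂ) (B : Set ℂ) : Prop :=
  (∀ k, A k ⊆ B) ∧
    ∀ U : Set ℂ, IsOpen U → U.Nonempty → U ⊆ B → ∃ K : ℕ, ∀ k > K, (U ∩ A k).Nonempty

/-- A subset of `ℂ` has `k`-fold dihedral symmetry if it is stable under complex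
conjugation and under rotation by `2π/k` about the origin. -/
def HasDihedralSymm (k : ℕ) (A : Set ℂ) : Prop :=
  (∀ z ∈ A, (starRingEnd ℂ) z ∈ A) ∧ ∀ z ∈ A, e2 (1 / k) * z ∈ A

/-- The `k`-fold dihedral closure of a subset of `ℂ`. -/
def dihedralClosure (k : ℕ) (A : Set ℂ) : Set ℂ :=
  ⋂₀ {B : Set ℂ | A ⊆ B ∧ HasDihedralSymm k B}

/-- The Gauss sum `g_k(t) = ∑_{j=1}^{p} e(t j^k / p)` of order `k` mod `p`. -/
noncomputable def gaussG (p k : ℕ) (t : ZMod p) : ℂ :=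
  ∑ j ∈ Finset.Icc 1 p, e2 ((((t * (j : ZMod p) ^ k).val : ℕ) : ℝ) / (p : ℝ))

/-- The Gauss sum `G(t,χ) = ∑_{j=1}^{p-1} χ(j) e(tj/p)` attached to a character `χ` mod `p`. -/
noncomputable def GSum (p : ℕ) (χ : DirichletCharacter ℂ p) (t : ZMod p) : ℂ :=
  ∑ j ∈ Finset.Icc 1 (p - 1), χ (j : ZMod p) * e2 ((((t * (j : ZMod p)).val : ℕ) : ℝ) / (p : ℝ))

/-!
Writing `ψ` for the standard additive character of `ℤ/nℤ`, `σ_ω(y) = ∑ⱼ ψ(ωʲ y)`. Since `k`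
divides `ω - 1`, the element `n/k` is fixed by `ω`, so shifting `y` by `n/k` multiplies every
term by `ψ(n/k) = e(1/k)`; and `ψ(-x) = conj ψ(x)` because `ψ` takes values on the unit circle.
-/

open ComplexConjugate

lemma e2_val_div_eq_stdAddChar {n : ℕ} [NeZero n] (a : ZMod n) :
    e2 ((a.val : ℝ) / n) = ZMod.stdAddChar a := by
  rw [ZMod.stdAddChar_apply, ZMod.toCircle_apply, e2]
  push_cast
  ring_nf

lemma stdAddChar_natCast_div {n k : ℕ} [NeZero n] (hk : k ∣ n) :
    ZMod.stdAddChar ((n / k : ℕ) : ZMod n) = e2 (1 / k) := by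
  have hk0 : (k : ℂ) ≠ 0 := Nat.cast_ne_zero.mpr (ne_zero_of_dvd_ne_zero (NeZero.ne n) hk)
  have hn0 : (n : ℂ) ≠ 0 := Nat.cast_ne_zero.mpr (NeZero.ne n)
  rw [ZMod.stdAddChar_apply, ZMod.toCircle_natCast, e2, Nat.cast_div hk hk0]
  congr 1
  push_cast
  field_simp

lemma natCast_mul_natCast_div_eq_zero {m k n : ℕ} (hm : k ∣ m) (hn : k ∣ n) :
    (m : ZMod n) * ((n / k : ℕ) : ZMod n) = 0 := by
  obtain ⟨t, rfl⟩ := hm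
  rw [← Nat.cast_mul, ZMod.natCast_eq_zero_iff, mul_comm k, mul_assoc, Nat.mul_div_cancel' hn]
  exact dvd_mul_left n t

section CyclicSuperchar

variable {n : ℕ} [NeZero n] (ω : (ZMod n)ˣ)

lemma cyclicSuperchar_eq_sum_stdAddChar (y : ZMod n) :
    cyclicSuperchar n ω y =
      ∑ j ∈ Icc 1 (orderOf ω), ZMod.stdAddChar (((ω ^ j : (ZMod n)ˣ) : ZMod n) * y) := by
  simp only [cyclicSuperchar, e2_val_div_eq_stdAddChar]

lemma cyclicSuperchar_add_of_mul_eq {c : ZMod n} (hc : (ω : ZMod n) * c = c) (y : ZMod n) :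
    cyclicSuperchar n ω (y + c) = ZMod.stdAddChar c * cyclicSuperchar n ω y := by
  have hpow (j : ℕ) : ((ω ^ j : (ZMod n)ˣ) : ZMod n) * c = c := by
    induction j with
    | zero => simp
    | succ j ih => rw [pow_succ, Units.val_mul, mul_assoc, hc, ih]
  rw [cyclicSuperchar_eq_sum_stdAddChar, cyclicSuperchar_eq_sum_stdAddChar, mul_sum]
  refine sum_congr rfl fun j _ => ?_
  rw [mul_add, hpow, AddChar.map_add_eq_mul, mul_comm]

lemma cyclicSuperchar_neg (y : ZMod n) :
    cyclicSuperchar n ω (-y) = conj (cyclicSuperchar n ω y) := by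
  simp only [cyclicSuperchar_eq_sum_stdAddChar, map_sum, mul_neg, AddChar.map_neg_eq_conj]

end CyclicSuperchar

/-- For a cyclic supercharacter `σ_ω` mod `n` with `k = gcd(ω - 1, n)`,
one has `σ_ω(y + n/k) = e(1/k)·σ_ω(y)` and `σ_ω(-y) = conj(σ_ω(y))` for every `y`. -/
theorem stmt7 (n : ℕ) (hn : 0 < n) (ω : (ZMod n)ˣ)
    (k : ℕ) (hk : k = Nat.gcd (((ω : ZMod n) - 1).val) n) (y : ZMod n) :
    cyclicSuperchar n ω (y + ((n / k : ℕ) : ZMod n)) = e2 (1 / (k : ℝ)) * cyclicSuperchar n ω y ∧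
    cyclicSuperchar n ω (-y) = (starRingEnd ℂ) (cyclicSuperchar n ω y) := by
  have : NeZero n := ⟨hn.ne'⟩
  have hk_dvd : k ∣ n := hk ▸ Nat.gcd_dvd_right _ _
  have hfix : (ω : ZMod n) * ((n / k : ℕ) : ZMod n) = ((n / k : ℕ) : ZMod n) := by
    have h := natCast_mul_natCast_div_eq_zero (hk ▸ Nat.gcd_dvd_left _ _) hk_dvd
    rw [ZMod.natCast_zmod_val] at h
    linear_combination h
  refine ⟨?_, cyclicSuperchar_neg ω y⟩
  rw [cyclicSuperchar_add_of_mul_eq ω hfix, stdAddChar_natCast_div hk_dvd]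
end

section
/- Let σ_ω be a cyclic supercharacter modulo n, where ω is a unit modulo n with multiplicative order d > 1. If gcd(ω − 1, n) = 1, then the image of σ_ω is contained in H_d, the set of traces of matrices in the special unitary group SU_d(ℂ). -/
open Finset Pointwise

/-! The values of `σ_ω` are traces of diagonal matrices `diag(e(ω^j y / n))_{1 ≤ j ≤ d}`, which are
unitary. The determinant is `e(∑_j ω^j y / n)`, and this is `1` because `∑_{j=1}^d ω^j = 0` in
`ℤ/nℤ`: it is killed by `ω - 1` (as `ω^d = 1`), and `ω - 1` is a unit by the gcd hypothesis. -/

lemma norm_e2 (θ : ℝ) : ‖e2 θ‖ = 1 := by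
  rw [e2, show 2 * Real.pi * Complex.I * θ = ↑(2 * Real.pi * θ) * Complex.I by push_cast; ring]
  exact Complex.norm_exp_ofReal_mul_I _

lemma prod_e2 {ι : Type*} (s : Finset ι) (θ : ι → ℝ) :
    ∏ i ∈ s, e2 (θ i) = e2 (∑ i ∈ s, θ i) := by
  simp only [e2, ← Complex.exp_sum, ← Finset.mul_sum, Complex.ofReal_sum]

lemma e2_natCast_div_eq_one {k n : ℕ} (h : n ∣ k) : e2 (k / n) = 1 := by
  obtain ⟨m, rfl⟩ := h
  rcases Nat.eq_zero_or_pos n with rfl | hn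
  · simp [e2]
  · rw [Nat.cast_mul, mul_div_cancel_left₀ _ (by positivity), e2]
    simpa [mul_comm] using Complex.exp_nat_mul_two_pi_mul_I m

lemma prod_e2_val_div_eq_one {ι : Type*} {n : ℕ} [NeZero n] (s : Finset ι) (a : ι → ZMod n)
    (h : ∑ i ∈ s, a i = 0) : ∏ i ∈ s, e2 ((a i).val / n) = 1 := by
  rw [prod_e2, ← Finset.sum_div, ← Nat.cast_sum]
  refine e2_natCast_div_eq_one ((ZMod.natCast_eq_zero_iff _ n).mp ?_)
  simpa [ZMod.natCast_zmod_val] using h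

lemma sum_Icc_pow_eq_zero {R : Type*} [CommRing R] {u : R} {d : ℕ} (hu : IsUnit (u - 1))
    (hd : u ^ d = 1) : ∑ j ∈ Finset.Icc 1 d, u ^ j = 0 := by
  have hgeom : ∑ j ∈ Finset.range d, u ^ j = 0 := by
    rw [← hu.mul_left_eq_zero, geom_sum_mul, hd, sub_self]
  rw [← Finset.Ico_add_one_right_eq_Icc, Finset.sum_Ico_eq_sum_range, Nat.add_sub_cancel]
  simp only [pow_add, pow_one, ← Finset.mul_sum, hgeom, mul_zero]

lemma Matrix.diagonal_mem_specialUnitaryGroup {m 𝕜 : Type*} [Fintype m] [DecidableEq m]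
    [RCLike 𝕜] {l : m → 𝕜} (hl : ∀ i, ‖l i‖ = 1) (hprod : ∏ i, l i = 1) :
    Matrix.diagonal l ∈ Matrix.specialUnitaryGroup m 𝕜 := by
  rw [Matrix.mem_specialUnitaryGroup_iff, Matrix.mem_unitaryGroup_iff, Matrix.star_eq_conjTranspose,
    Matrix.diagonal_conjTranspose, Matrix.diagonal_mul_diagonal, Matrix.det_diagonal,
    ← Matrix.diagonal_one]
  refine ⟨congrArg Matrix.diagonal (funext fun i => ?_), hprod⟩
  simp [RCLike.mul_conj, hl i]

lemma Finset.sum_mem_H {ι : Type*} (s : Finset ι) {l : ι → ℂ} (hl : ∀ i ∈ s, ‖l i‖ = 1)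
    (hprod : ∏ i ∈ s, l i = 1) : ∑ i ∈ s, l i ∈ H s.card := by
  have hprod' : ∏ k, l (s.equivFin.symm k) = 1 := by
    rw [← hprod, ← Finset.prod_coe_sort s, ← s.equivFin.symm.prod_comp]
  refine ⟨⟨_, Matrix.diagonal_mem_specialUnitaryGroup (fun k => hl _ (Subtype.prop _)) hprod'⟩, ?_⟩
  rw [← Finset.sum_coe_sort s, ← s.equivFin.symm.sum_comp]
  exact Matrix.trace_diagonal _

theorem stmt8_general (n : ℕ) (hn : 0 < n) (ω : (ZMod n)ˣ)
    (hcop : Nat.gcd (((ω : ZMod n) - 1).val) n = 1) :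
    Set.range (cyclicSuperchar n ω) ⊆ H (orderOf ω) := by
  have : NeZero n := ⟨hn.ne'⟩
  rintro _ ⟨y, rfl⟩
  have hunit : IsUnit ((ω : ZMod n) - 1) := by
    simpa [ZMod.natCast_zmod_val] using (ZMod.isUnit_iff_coprime _ n).mpr hcop
  have hpow : (ω : ZMod n) ^ orderOf ω = 1 := by
    rw [← Units.val_pow_eq_pow_val, pow_orderOf_eq_one, Units.val_one]
  have hsum : ∑ j ∈ Finset.Icc 1 (orderOf ω), ((ω ^ j : (ZMod n)ˣ) : ZMod n) * y = 0 := by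
    simp only [Units.val_pow_eq_pow_val, ← Finset.sum_mul, sum_Icc_pow_eq_zero hunit hpow, zero_mul]
  have hmem := (Finset.Icc 1 (orderOf ω)).sum_mem_H (fun _ _ => norm_e2 _) (prod_e2_val_div_eq_one _ _ hsum)
  rwa [Nat.card_Icc, Nat.add_sub_cancel] at hmem

/-- For a cyclic supercharacter `σ_ω` mod `n` where `ω` has multiplicative
order `d > 1` and `gcd(ω - 1, n) = 1`, the image of `σ_ω` is contained in `H_d`. -/
theorem stmt8 (n : ℕ) (hn : 0 < n) (ω : (ZMod n)ˣ) (hd : 1 < orderOf ω)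
    (hcop : Nat.gcd (((ω : ZMod n) - 1).val) n = 1) :
    Set.range (cyclicSuperchar n ω) ⊆ H (orderOf ω) :=
  stmt8_general n hn ω hcop
end
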